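/- arXiv:2605.07386 — 10 statements merged into one kernel-verified Lean document; each statement's English description precedes it below -/
import Mathlib

section
/- There exists a constant c = √(D·r_0/√2) > 0 and a threshold T_0 such that for every even integer T ≥ T_0 the following holds: there exist a compact convex square X ⊂ ℝ² of side length D/√2 whose closest point to the origin has norm r_0, and nested compact convex sets X ⊇ S_1 ⊇ S_2 ⊇ ⋯ ⊇ S_T, such that, writing x_0^⋆ for the minimizer of f(x) = ‖x‖² over X and x_t^⋆ for the unique minimizer of f over S_t, the total movement of the greedy algorithm satisfies ∑_{t=1}^T ‖x_t^⋆ − x_{t−1}^⋆‖ ≥ c·√T. -/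
/-!
The greedy iterates are `p t = ρ t • u t`, where `u t` alternates between `e₂` and the unit vector
at angle `θ` from it and `ρ t = R / cos θ ^ t`; this growth rate is exactly what makes
`‖p k‖² ≤ ⟪p k, p t⟫` for `k ≤ t`. Cutting the square by the half-spaces
`{y | ‖p k‖² ≤ ⟪p k, y⟫}`, `k ≤ t`, makes `p t` the unique minimiser of `‖·‖²` on `S t`, and
consecutive minimisers differ by at least `R sin θ` in the first coordinate. For the square of
side `s = D / √2` nearest the origin at `(0, r₀)`, take `R = r₀ + s / 2` and
`sin θ = √(s r₀ / T) / R`: then `cos θ ^ T ≥ 1 - T sin² θ / 2` for even `T` keeps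
`ρ T ≤ r₀ + s`, so every `p t` stays in the square while the total movement is
`T R sin θ = √(s r₀ T)`.
-/

open Real
open scoped InnerProductSpace

namespace GreedyCones

section HalfSpaceCuts

variable {E : Type*} [NormedAddCommGroup E] [InnerProductSpace ℝ E]

lemma sq_norm_lt_sq_norm_of_sq_norm_le_inner {p y : E} (h : ‖p‖ ^ 2 ≤ ⟪p, y⟫_ℝ)
    (hne : y ≠ p) : ‖p‖ ^ 2 < ‖y‖ ^ 2 := by
  have hpos : 0 < ‖y - p‖ ^ 2 := pow_pos (norm_pos_iff.2 (sub_ne_zero.2 hne)) 2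
  nlinarith [norm_sub_sq_real y p, real_inner_comm p y]

def cutSet (X : Set E) (p : ℕ → E) (t : ℕ) : Set E :=
  X ∩ ⋂ k ≤ t, {y | ‖p k‖ ^ 2 ≤ ⟪p k, y⟫_ℝ}

variable {X : Set E} {p : ℕ → E} {t : ℕ}

lemma cutSet_subset : cutSet X p t ⊆ X := Set.inter_subset_left

lemma cutSet_antitone : Antitone (cutSet X p) := fun _ _ h =>
  Set.inter_subset_inter_right _ (Set.biInter_subset_biInter_left fun _ hk => le_trans hk h)

lemma isCompact_cutSet (hX : IsCompact X) : IsCompact (cutSet X p t) :=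
  hX.inter_right <| isClosed_biInter fun _ _ =>
    isClosed_le continuous_const (continuous_const.inner continuous_id)

lemma convex_cutSet (hX : Convex ℝ X) : Convex ℝ (cutSet X p t) :=
  hX.inter <| convex_iInter₂ fun k _ =>
    convex_halfSpace_ge (innerₛₗ ℝ (p k)).isLinear _

lemma mem_cutSet_self (hpX : p t ∈ X) (hp : ∀ k ≤ t, ‖p k‖ ^ 2 ≤ ⟪p k, p t⟫_ℝ) :
    p t ∈ cutSet X p t :=
  ⟨hpX, Set.mem_iInter₂.2 hp⟩

lemma sq_norm_lt_of_mem_cutSet {y : E} (hy : y ∈ cutSet X p t) (hne : y ≠ p t) :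
    ‖p t‖ ^ 2 < ‖y‖ ^ 2 :=
  sq_norm_lt_sq_norm_of_sq_norm_le_inner (Set.mem_iInter₂.1 hy.2 t le_rfl) hne

end HalfSpaceCuts

section Cube

variable {ι : Type*}

def cube (z : EuclideanSpace ℝ ι) (s : ℝ) : Set (EuclideanSpace ℝ ι) :=
  {x | ∀ i, z i ≤ x i ∧ x i ≤ z i + s}

lemma cube_eq_preimage_Icc (z : EuclideanSpace ℝ ι) (s : ℝ) :
    cube z s = PiLp.continuousLinearEquiv 2 ℝ _ ⁻¹' Set.Icc z.ofLp (z.ofLp + fun _ => s) := by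
  ext x
  simp [cube, Pi.le_def, forall_and]

lemma isCompact_cube [Fintype ι] (z : EuclideanSpace ℝ ι) (s : ℝ) : IsCompact (cube z s) := by
  rw [cube_eq_preimage_Icc]
  exact (PiLp.continuousLinearEquiv 2 ℝ _).toHomeomorph.isCompact_preimage.2 isCompact_Icc

lemma convex_cube (z : EuclideanSpace ℝ ι) (s : ℝ) : Convex ℝ (cube z s) := by
  rw [cube_eq_preimage_Icc]
  exact (convex_Icc _ _).linear_preimage (PiLp.continuousLinearEquiv 2 ℝ _).toLinearMap

lemma self_mem_cube (z : EuclideanSpace ℝ ι) {s : ℝ} (hs : 0 ≤ s) : z ∈ cube z s :=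
  fun _ => ⟨le_rfl, le_add_of_nonneg_right hs⟩

lemma norm_le_norm_of_mem_cube [Fintype ι] {z x : EuclideanSpace ℝ ι} {s : ℝ} (hz : ∀ i, 0 ≤ z i)
    (hx : x ∈ cube z s) : ‖z‖ ≤ ‖x‖ := by
  rw [EuclideanSpace.norm_eq, EuclideanSpace.norm_eq]
  gcongr with i
  exact abs_le_abs_of_nonneg (hz i) (hx i).1

end Cube

section Zigzag

noncomputable def zigzagDir (θ : ℝ) (t : ℕ) : EuclideanSpace ℝ (Fin 2) :=
  if Even t then !₂[0, 1] else !₂[sin θ, cos θ]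

noncomputable def zigzag (R θ : ℝ) (t : ℕ) : EuclideanSpace ℝ (Fin 2) :=
  (R / cos θ ^ t) • zigzagDir θ t

lemma norm_zigzagDir (θ : ℝ) (t : ℕ) : ‖zigzagDir θ t‖ = 1 := by
  unfold zigzagDir
  split_ifs <;> simp [EuclideanSpace.norm_eq, Fin.sum_univ_two]

lemma cos_le_inner_zigzagDir (θ : ℝ) (k t : ℕ) :
    cos θ ≤ ⟪zigzagDir θ k, zigzagDir θ t⟫_ℝ := by
  unfold zigzagDir
  split_ifs <;> simp [PiLp.inner_apply, EuclideanSpace.norm_eq, Fin.sum_univ_two] <;>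
    nlinarith [cos_le_one θ, sin_sq_add_cos_sq θ]

variable {R θ : ℝ}

lemma div_cos_pow_le_div_cos_pow (hR : 0 ≤ R) (hc : 0 < cos θ) {k t : ℕ} (h : k ≤ t) :
    R / cos θ ^ k ≤ R / cos θ ^ t :=
  div_le_div_of_nonneg_left hR (pow_pos hc t) (pow_le_pow_of_le_one hc.le (cos_le_one θ) h)

lemma le_div_cos_pow (hR : 0 ≤ R) (hc : 0 < cos θ) (t : ℕ) : R ≤ R / cos θ ^ t := by
  simpa using div_cos_pow_le_div_cos_pow hR hc (Nat.zero_le t)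

lemma div_cos_pow_succ_mul_cos (hc : 0 < cos θ) (t : ℕ) :
    R / cos θ ^ (t + 1) * cos θ = R / cos θ ^ t := by
  field_simp
  ring

lemma norm_zigzag (hR : 0 ≤ R) (hc : 0 < cos θ) (t : ℕ) : ‖zigzag R θ t‖ = R / cos θ ^ t := by
  rw [zigzag, norm_smul, norm_zigzagDir, mul_one, Real.norm_of_nonneg]
  exact div_nonneg hR (pow_pos hc t).le

lemma sq_norm_zigzag_le_inner (hR : 0 ≤ R) (hc : 0 < cos θ) {k t : ℕ} (hkt : k ≤ t) :
    ‖zigzag R θ k‖ ^ 2 ≤ ⟪zigzag R θ k, zigzag R θ t⟫_ℝ := by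
  rcases hkt.eq_or_lt with rfl | hlt
  · exact (real_inner_self_eq_norm_sq _).ge
  obtain ⟨n, rfl⟩ := Nat.exists_eq_add_one_of_ne_zero (Nat.ne_zero_of_lt hlt)
  have hρk : 0 ≤ R / cos θ ^ k := div_nonneg hR (pow_pos hc k).le
  calc ‖zigzag R θ k‖ ^ 2 = R / cos θ ^ k * (R / cos θ ^ k) := by rw [norm_zigzag hR hc, sq]
    _ ≤ R / cos θ ^ k * (R / cos θ ^ (n + 1) * cos θ) := by
        rw [div_cos_pow_succ_mul_cos hc]
        exact mul_le_mul_of_nonneg_left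
          (div_cos_pow_le_div_cos_pow hR hc (Nat.lt_succ_iff.1 hlt)) hρk
    _ ≤ R / cos θ ^ k * (R / cos θ ^ (n + 1) * ⟪zigzagDir θ k, zigzagDir θ (n + 1)⟫_ℝ) := by
        gcongr
        exact cos_le_inner_zigzagDir θ k (n + 1)
    _ = ⟪zigzag R θ k, zigzag R θ (n + 1)⟫_ℝ := by
        rw [zigzag, zigzag, real_inner_smul_left, real_inner_smul_right]

lemma zigzag_apply_zero (R θ : ℝ) (t : ℕ) :
    zigzag R θ t 0 = if Even t then 0 else R / cos θ ^ t * sin θ := by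
  unfold zigzag zigzagDir
  split_ifs <;> simp

lemma zigzag_mem_cube {r₀ s : ℝ} (hr : 0 ≤ r₀) (hR : r₀ ≤ R) (hc : 0 < cos θ)
    (hs : 0 ≤ sin θ) {T : ℕ} (hρT : R / cos θ ^ T ≤ r₀ + s) (hsin : (r₀ + s) * sin θ ≤ s)
    {t : ℕ} (ht : t ≤ T) : zigzag R θ t ∈ cube !₂[0, r₀] s := by
  have hρ : R / cos θ ^ t ≤ r₀ + s := (div_cos_pow_le_div_cos_pow (hr.trans hR) hc ht).trans hρT
  have hρR : r₀ ≤ R / cos θ ^ t := hR.trans (le_div_cos_pow (hr.trans hR) hc t)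
  have hρ₀ : 0 ≤ R / cos θ ^ t * sin θ := mul_nonneg (hr.trans hρR) hs
  have hρs : R / cos θ ^ t * sin θ ≤ s := (mul_le_mul_of_nonneg_right hρ hs).trans hsin
  simp only [cube, Fin.forall_fin_two]
  unfold zigzag zigzagDir
  split_ifs with hev
  · simp only [Fin.isValue, Matrix.cons_val_zero, zero_add, Matrix.cons_val_one,
      Matrix.cons_val_fin_one, Set.mem_ofPred_eq, PiLp.smul_apply, smul_eq_mul, mul_zero, le_refl,
      true_and, mul_one]
    exact ⟨hρ₀.trans hρs, hρR, hρ⟩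
  · have ht0 : t ≠ 0 := by rintro rfl; exact hev Even.zero
    obtain ⟨n, rfl⟩ := Nat.exists_eq_add_one_of_ne_zero ht0
    simp only [Fin.isValue, Matrix.cons_val_zero, zero_add, Matrix.cons_val_one,
      Matrix.cons_val_fin_one, Set.mem_ofPred_eq, PiLp.smul_apply, smul_eq_mul]
    refine ⟨⟨hρ₀, hρs⟩, ?_, (mul_le_of_le_one_right (hr.trans hρR) (cos_le_one θ)).trans hρ⟩
    rw [div_cos_pow_succ_mul_cos hc]
    exact hR.trans (le_div_cos_pow (hr.trans hR) hc n)

lemma mul_sin_le_norm_sub (hR : 0 ≤ R) (hc : 0 < cos θ) (hs : 0 ≤ sin θ)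
    {x : ℕ → EuclideanSpace ℝ (Fin 2)} (hx : ∀ t, x t 0 = zigzag R θ t 0) {t : ℕ} (ht : 1 ≤ t) :
    R * sin θ ≤ ‖x t - x (t - 1)‖ := by
  obtain ⟨n, rfl⟩ := Nat.exists_eq_add_of_le' ht
  calc R * sin θ ≤ |x (n + 1) 0 - x n 0| := by
        rw [hx, hx, zigzag_apply_zero, zigzag_apply_zero]
        rcases Nat.even_or_odd n with hn | hn
        · rw [if_pos hn, if_neg (Nat.not_even_iff_odd.2 hn.add_one), sub_zero]
          exact le_abs.2 (.inl (mul_le_mul_of_nonneg_right (le_div_cos_pow hR hc _) hs))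
        · rw [if_neg (Nat.not_even_iff_odd.2 hn), if_pos hn.add_one, zero_sub, abs_neg]
          exact le_abs.2 (.inl (mul_le_mul_of_nonneg_right (le_div_cos_pow hR hc _) hs))
    _ ≤ ‖x (n + 1) - x (n + 1 - 1)‖ := by simpa using PiLp.norm_apply_le (x (n + 1) - x n) 0

lemma mul_mul_sin_le_sum_norm_sub (hR : 0 ≤ R) (hc : 0 < cos θ) (hs : 0 ≤ sin θ)
    {x : ℕ → EuclideanSpace ℝ (Fin 2)} (hx : ∀ t, x t 0 = zigzag R θ t 0) (T : ℕ) :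
    T * (R * sin θ) ≤ ∑ t ∈ Finset.Icc 1 T, ‖x t - x (t - 1)‖ :=
  calc (T : ℝ) * (R * sin θ) = (Finset.Icc 1 T).card • (R * sin θ) := by simp
    _ ≤ _ := Finset.card_nsmul_le_sum _ _ _ fun _ ht =>
        mul_sin_le_norm_sub hR hc hs hx (Finset.mem_Icc.1 ht).1

lemma update_zigzag_apply_zero {z : EuclideanSpace ℝ (Fin 2)} (hz : z 0 = 0) (t : ℕ) :
    Function.update (zigzag R θ) 0 z t 0 = zigzag R θ t 0 := by
  rcases eq_or_ne t 0 with rfl | ht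
  · rw [Function.update_self, hz, zigzag_apply_zero, if_pos Even.zero]
  · rw [Function.update_of_ne ht]

end Zigzag

lemma one_sub_mul_sin_sq_le_cos_pow (θ : ℝ) (m : ℕ) : 1 - m * sin θ ^ 2 ≤ cos θ ^ (2 * m) := by
  rw [pow_mul, cos_sq', sub_eq_add_neg, sub_eq_add_neg, ← mul_neg]
  exact one_add_mul_le_pow (by nlinarith [sin_sq_le_one θ]) m

lemma div_cos_pow_le_add {r₀ s θ : ℝ} (hs : 0 < s) (hr : 0 < r₀) (hcos : 0 < cos θ) {m : ℕ}
    (hθ : m * sin θ ^ 2 = s * r₀ / (2 * (r₀ + s / 2) ^ 2)) :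
    (r₀ + s / 2) / cos θ ^ (2 * m) ≤ r₀ + s := by
  have hgap : (r₀ + s) * (1 - m * sin θ ^ 2) - (r₀ + s / 2) = s ^ 3 / (8 * (r₀ + s / 2) ^ 2) := by
    rw [hθ]
    field_simp
    ring
  rw [div_le_iff₀ (pow_pos hcos _)]
  calc r₀ + s / 2 ≤ (r₀ + s) * (1 - m * sin θ ^ 2) := by
        rw [← sub_nonneg, hgap]
        positivity
    _ ≤ (r₀ + s) * cos θ ^ (2 * m) :=
        mul_le_mul_of_nonneg_left (one_sub_mul_sin_sq_le_cos_pow θ m) (by positivity)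

lemma exists_zigzag_params {s r₀ c : ℝ} (hs : 0 < s) (hr : 0 < r₀) (hc : 0 ≤ c)
    (hc2 : c ^ 2 = s * r₀) {T : ℕ} (hT : 4 * r₀ ≤ s * T) (hTeven : Even T) :
    ∃ R θ, r₀ ≤ R ∧ 0 < cos θ ∧ 0 ≤ sin θ ∧ R / cos θ ^ T ≤ r₀ + s ∧
      (r₀ + s) * sin θ ≤ s ∧ c * √T = T * (R * sin θ) := by
  set R := r₀ + s / 2 with hR_def
  have hR : 0 < R := by positivity
  have hT0 : (0 : ℝ) < T := pos_of_mul_pos_right (hT.trans_lt' (by positivity)) hs.le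
  set a := c / (R * √T) with ha_def
  have ha0 : 0 ≤ a := by positivity
  have ha_sq : a ^ 2 = s * r₀ / (R ^ 2 * T) := by
    rw [ha_def, div_pow, mul_pow, sq_sqrt hT0.le, hc2]
  have ha_le : a ≤ s / (2 * R) := by
    refine (pow_le_pow_iff_left₀ ha0 (by positivity) two_ne_zero).1 ?_
    rw [ha_sq, div_pow, div_le_div_iff₀ (by positivity) (by positivity)]
    nlinarith [mul_le_mul_of_nonneg_left hT (by positivity : (0 : ℝ) ≤ s * R ^ 2)]
  have ha1 : a < 1 := ha_le.trans_lt ((div_lt_one (by positivity)).2 (by linarith))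
  have hsin : sin (arcsin a) = a := sin_arcsin (by linarith) ha1.le
  have hcos : 0 < cos (arcsin a) := by
    rw [cos_arcsin]
    exact sqrt_pos.2 (by nlinarith)
  refine ⟨R, arcsin a, by linarith, hcos, hsin.symm ▸ ha0, ?_, ?_, ?_⟩
  · obtain ⟨m, rfl⟩ := hTeven
    have hm : (0 : ℝ) < m := by push_cast at hT0; linarith
    refine two_mul m ▸ div_cos_pow_le_add hs hr hcos ?_
    rw [hsin, ha_sq]
    push_cast
    field_simp
    ring
  · rw [hsin]
    calc (r₀ + s) * a ≤ (r₀ + s) * (s / (2 * R)) := by gcongr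
      _ ≤ s := by
          rw [mul_div_assoc', div_le_iff₀ (by positivity)]
          nlinarith
  · rw [hsin, ha_def]
    field_simp
    rw [sq_sqrt hT0.le]

end GreedyCones

open GreedyCones

/-- Ω(√T) lower bound on the movement cost of the greedy algorithm for the strongly
convex loss `f x = ‖x‖²`: there is a constant `c = √(D·r₀/√2) > 0` and a threshold `T₀`
such that for every even `T ≥ T₀` there are a compact convex axis-aligned square
`X ⊂ ℝ²` of side `D/√2` whose closest point to the origin has norm `r₀`, and nested
compact convex sets `X ⊇ S 1 ⊇ ⋯ ⊇ S T`, with `xs 0` the minimizer of `f` over `X` and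
`xs t` the unique minimizer of `f` over `S t`, for which the greedy movement cost is at
least `c·√T`. -/
theorem greedy_movement_lower_bound_strongly_convex
    (D r₀ : ℝ) (hD : 0 < D) (hr : 0 < r₀) :
    ∃ c : ℝ, c = Real.sqrt (D * r₀ / Real.sqrt 2) ∧ 0 < c ∧
    ∃ T₀ : ℕ, ∀ T : ℕ, T₀ ≤ T → Even T →
      ∃ (X : Set (EuclideanSpace ℝ (Fin 2)))
        (S : ℕ → Set (EuclideanSpace ℝ (Fin 2)))
        (xs : ℕ → EuclideanSpace ℝ (Fin 2)),
        IsCompact X ∧ Convex ℝ X ∧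
        (∃ z : EuclideanSpace ℝ (Fin 2),
          X = {x | ∀ i, z i ≤ x i ∧ x i ≤ z i + D / Real.sqrt 2}) ∧
        (∃ p ∈ X, ‖p‖ = r₀ ∧ ∀ q ∈ X, ‖p‖ ≤ ‖q‖) ∧
        S 1 ⊆ X ∧
        (∀ t, 1 ≤ t → t < T → S (t + 1) ⊆ S t) ∧
        (∀ t ∈ Finset.Icc 1 T, IsCompact (S t) ∧ Convex ℝ (S t)) ∧
        (xs 0 ∈ X ∧ ∀ y ∈ X, ‖xs 0‖ ^ 2 ≤ ‖y‖ ^ 2) ∧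
        (∀ t ∈ Finset.Icc 1 T, xs t ∈ S t ∧
          ∀ y ∈ S t, y ≠ xs t → ‖xs t‖ ^ 2 < ‖y‖ ^ 2) ∧
        c * Real.sqrt T ≤ ∑ t ∈ Finset.Icc 1 T, ‖xs t - xs (t - 1)‖ := by
  set s := D / √2
  have hs : 0 < s := by positivity
  have hc2 : √(D * r₀ / √2) ^ 2 = s * r₀ := by rw [sq_sqrt (by positivity), mul_div_right_comm]
  refine ⟨_, rfl, sqrt_pos.2 (by positivity), ⌈4 * r₀ / s⌉₊, fun T hT hTeven => ?_⟩
  have hT' : 4 * r₀ ≤ s * T := by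
    rw [← div_le_iff₀' hs]
    exact (Nat.le_ceil _).trans (by exact_mod_cast hT)
  obtain ⟨R, θ, hrR, hcos, hsin, hρT, hsinR, hsum⟩ :=
    exists_zigzag_params hs hr (sqrt_nonneg _) hc2 hT' hTeven
  have hR : 0 ≤ R := hr.le.trans hrR
  set z : EuclideanSpace ℝ (Fin 2) := !₂[0, r₀]
  have hz : ∀ i, 0 ≤ z i := by simp [z, Fin.forall_fin_two, hr.le]
  refine ⟨cube z s, cutSet (cube z s) (zigzag R θ), Function.update (zigzag R θ) 0 z,
    isCompact_cube z s, convex_cube z s, ⟨z, rfl⟩,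
    ⟨z, self_mem_cube z hs.le, by simp [z, EuclideanSpace.norm_eq, hr.le],
      fun q hq => norm_le_norm_of_mem_cube hz hq⟩,
    cutSet_subset, fun t _ _ => cutSet_antitone t.le_succ,
    fun t _ => ⟨isCompact_cutSet (isCompact_cube z s), convex_cutSet (convex_cube z s)⟩,
    ?_, fun t ht => ?_, ?_⟩
  · rw [Function.update_self]
    exact ⟨self_mem_cube z hs.le, fun y hy =>
      pow_le_pow_left₀ (norm_nonneg _) (norm_le_norm_of_mem_cube hz hy) 2⟩
  · obtain ⟨ht1, htT⟩ := Finset.mem_Icc.1 ht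
    rw [Function.update_of_ne (by omega)]
    exact ⟨mem_cutSet_self (zigzag_mem_cube hr.le hrR hcos hsin hρT hsinR htT)
        fun _ hk => sq_norm_zigzag_le_inner hR hcos hk,
      fun _ hy hne => sq_norm_lt_of_mem_cutSet hy hne⟩
  · rw [hsum]
    exact mul_mul_sin_le_sum_norm_sub hR hcos hsin (update_zigzag_apply_zero (by simp [z])) T
end

section
/- Let E be a real inner product space, X ⊆ E a convex set of diameter at most D, f : E → ℝ a function that is μ-strongly convex on X and G-Lipschitz on X, and let S_1 ⊇ S_2 ⊇ ⋯ ⊇ S_T be nested nonempty subsets of X such that f attains its minimum over S_t at a point x_t^⋆ ∈ S_t for each t. If each S_t is convex, then ∑_{t=1}^{T−1} ‖x_{t+1}^⋆ − x_t^⋆‖ ≤ √(2·G·D·T/μ). Consequently the movement cost of the greedy algorithm is at most √(2GDT/μ) + D = O(√T). -/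
/-!
Strong convexity makes a minimizer `x` of `f` over a convex set `S` sharp:
`μ/2 ‖y - x‖² ≤ f y - f x` for every `y ∈ S`. Since the sets are nested, `x_{t+1} ∈ S_t`, so
`μ/2 ‖x_{t+1} - x_t‖²` is bounded by the increase `f x_{t+1} - f x_t` of the optimal value.
These increases telescope to `f x_T - f x_1 ≤ G D`, and Cauchy–Schwarz turns the resulting
bound `2 G D / μ` on the sum of squared steps into the bound `√(2 G D T / μ)` on the sum of steps.
-/

open Filter Finset Topology

section StrongConvexity

variable {E : Type*} [NormedAddCommGroup E] [NormedSpace ℝ E] {s : Set E} {m : ℝ} {f : E → ℝ}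

theorem strongConvexOn_of_forall (hs : Convex ℝ s)
    (h : ∀ x ∈ s, ∀ y ∈ s, ∀ l : ℝ, 0 ≤ l → l ≤ 1 →
      f (l • x + (1 - l) • y) ≤ l * f x + (1 - l) * f y - l * (1 - l) * (m / 2) * ‖x - y‖ ^ 2) :
    StrongConvexOn s m f := by
  refine ⟨hs, fun x hx y hy a b ha hb hab => ?_⟩
  obtain rfl : b = 1 - a := by linarith
  simpa only [smul_eq_mul, mul_assoc] using h x hx y hy a ha (by linarith)

theorem StrongConvexOn.mul_sq_norm_sub_le_of_isMinOn {x y : E} (hf : StrongConvexOn s m f)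
    (hmin : IsMinOn f s x) (hx : x ∈ s) (hy : y ∈ s) :
    m / 2 * ‖y - x‖ ^ 2 ≤ f y - f x := by
  set q := m / 2 * ‖y - x‖ ^ 2 with hq
  -- compare `f x` with `f` at the point `l • y + (1 - l) • x` of `s`, then let `l → 0`
  have hshrink : ∀ l ∈ Set.Ioo (0 : ℝ) 1, (1 - l) * q ≤ f y - f x := by
    rintro l ⟨hl0, hl1⟩
    have hcomb := hf.2 hy hx hl0.le (sub_nonneg.2 hl1.le) (add_sub_cancel l 1)
    have hlow := isMinOn_iff.1 hmin _ <|
      hf.1 hy hx hl0.le (sub_nonneg.2 hl1.le) (add_sub_cancel l 1)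
    simp only [smul_eq_mul, ← hq] at hcomb
    exact le_of_mul_le_mul_left (by linear_combination hcomb + hlow) hl0
  have hcont : Continuous fun l : ℝ => (1 - l) * q := by fun_prop
  have hlim : Tendsto (fun l : ℝ => (1 - l) * q) (𝓝[>] 0) (𝓝 q) :=
    tendsto_nhdsWithin_of_tendsto_nhds (hcont.tendsto' 0 q (by simp))
  exact le_of_tendsto hlim (eventually_of_mem (Ioo_mem_nhdsGT one_pos) hshrink)

theorem mul_sum_sq_norm_sub_le_of_isMinOn_of_subset {S : ℕ → Set E} {x : ℕ → E} {a b : ℕ}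
    (hab : a ≤ b) (hf : ∀ t ∈ Ico a b, StrongConvexOn (S t) m f)
    (hnest : ∀ t ∈ Ico a b, S (t + 1) ⊆ S t) (hx : ∀ t ∈ Icc a b, x t ∈ S t)
    (hmin : ∀ t ∈ Ico a b, IsMinOn f (S t) (x t)) :
    m / 2 * ∑ t ∈ Ico a b, ‖x (t + 1) - x t‖ ^ 2 ≤ f (x b) - f (x a) := by
  rw [mul_sum, ← sum_Ico_sub (fun t => f (x t)) hab]
  refine sum_le_sum fun t ht => ?_
  have hsucc : t + 1 ∈ Icc a b := by
    simp only [mem_Ico, mem_Icc] at ht ⊢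
    omega
  exact (hf t ht).mul_sq_norm_sub_le_of_isMinOn (hmin t ht) (hx t (Ico_subset_Icc_self ht))
    (hnest t ht (hx _ hsucc))

end StrongConvexity

theorem sum_le_sqrt_card_mul_of_sum_sq_le {ι : Type*} {s : Finset ι} {d : ι → ℝ} {B : ℝ}
    (h : ∑ i ∈ s, d i ^ 2 ≤ B) : ∑ i ∈ s, d i ≤ √(#s * B) :=
  (le_abs_self _).trans <| Real.abs_le_sqrt <| sq_sum_le_card_mul_sum_sq.trans <| by gcongr

theorem greedy_movement_upper_bound_strongly_convex_general
    {E : Type*} [NormedAddCommGroup E] [InnerProductSpace ℝ E]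
    (X : Set E)
    (μ G D : ℝ) (hμ : 0 < μ) (hG : 0 < G) (hD : 0 < D)
    (hdiam : ∀ x ∈ X, ∀ y ∈ X, ‖x - y‖ ≤ D)
    (f : E → ℝ)
    (hsc : ∀ x ∈ X, ∀ y ∈ X, ∀ l : ℝ, 0 ≤ l → l ≤ 1 →
      f (l • x + (1 - l) • y) ≤
        l * f x + (1 - l) * f y - l * (1 - l) * (μ / 2) * ‖x - y‖ ^ 2)
    (hlip : ∀ x ∈ X, ∀ y ∈ X, |f x - f y| ≤ G * ‖x - y‖)
    (T : ℕ) (hT : 1 ≤ T)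
    (S : ℕ → Set E)
    (hSsub : ∀ t ∈ Finset.Icc 1 T, S t ⊆ X)
    (hSconv : ∀ t ∈ Finset.Icc 1 T, Convex ℝ (S t))
    (hnest : ∀ t, 1 ≤ t → t < T → S (t + 1) ⊆ S t)
    (xs : ℕ → E)
    (hmin : ∀ t ∈ Finset.Icc 1 T, xs t ∈ S t ∧ ∀ y ∈ S t, f (xs t) ≤ f y) :
    (∑ t ∈ Finset.Icc 1 (T - 1), ‖xs (t + 1) - xs t‖ ≤
      Real.sqrt (2 * G * D * T / μ)) ∧
    (∀ x₀ ∈ X, ‖xs 1 - x₀‖ + ∑ t ∈ Finset.Icc 1 (T - 1), ‖xs (t + 1) - xs t‖ ≤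
      Real.sqrt (2 * G * D * T / μ) + D) := by
  have hIcc : Icc 1 (T - 1) = Ico 1 T := Icc_sub_one_right_eq_Ico_of_not_isMin
    (by simpa [isMin_iff_eq_bot] using Nat.one_le_iff_ne_zero.1 hT) 1
  have hIco : ∀ t ∈ Ico 1 T, t ∈ Icc 1 T := fun t ht => Ico_subset_Icc_self ht
  have hX : ∀ t ∈ Icc 1 T, xs t ∈ X := fun t ht => hSsub t ht (hmin t ht).1
  have h1 : 1 ∈ Icc 1 T := mem_Icc.2 ⟨le_rfl, hT⟩
  have hTT : T ∈ Icc 1 T := mem_Icc.2 ⟨hT, le_rfl⟩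
  have hsq : μ / 2 * ∑ t ∈ Ico 1 T, ‖xs (t + 1) - xs t‖ ^ 2 ≤ f (xs T) - f (xs 1) :=
    mul_sum_sq_norm_sub_le_of_isMinOn_of_subset hT
      (fun t ht => strongConvexOn_of_forall (hSconv t (hIco t ht)) fun x hx y hy =>
        hsc x (hSsub t (hIco t ht) hx) y (hSsub t (hIco t ht) hy))
      (fun t ht => hnest t (mem_Ico.1 ht).1 (mem_Ico.1 ht).2) (fun t ht => (hmin t ht).1)
      (fun t ht => isMinOn_iff.2 (hmin t (hIco t ht)).2)
  have hgap : f (xs T) - f (xs 1) ≤ G * D := calc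
    f (xs T) - f (xs 1) ≤ G * ‖xs T - xs 1‖ := (le_abs_self _).trans (hlip _ (hX T hTT) _ (hX 1 h1))
    _ ≤ G * D := by gcongr; exact hdiam _ (hX T hTT) _ (hX 1 h1)
  have hmove : ∑ t ∈ Ico 1 T, ‖xs (t + 1) - xs t‖ ≤ √(2 * G * D * T / μ) := by
    refine (sum_le_sqrt_card_mul_of_sum_sq_le (B := 2 * G * D / μ) ?_).trans (Real.sqrt_le_sqrt ?_)
    · rw [le_div_iff₀ hμ]
      linarith
    · calc (#(Ico 1 T) : ℝ) * (2 * G * D / μ) ≤ T * (2 * G * D / μ) := by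
            gcongr
            simp
        _ = 2 * G * D * T / μ := by ring
  rw [hIcc]
  exact ⟨hmove, fun x₀ hx₀ => by linarith [hdiam _ (hX 1 h1) _ hx₀]⟩

/-- O(√T) upper bound on the movement cost of the greedy algorithm when `f` is
`μ`-strongly convex and `G`-Lipschitz on a convex set `X` of diameter at most `D`:
the total movement between successive constrained minimizers `x_t^⋆` over nested
convex sets `S t ⊆ X` is at most `√(2GDT/μ)`, and consequently the greedy movement
cost (starting from any `x₀ ∈ X`) is at most `√(2GDT/μ) + D`. -/
theorem greedy_movement_upper_bound_strongly_convex
    {E : Type*} [NormedAddCommGroup E] [InnerProductSpace ℝ E]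
    (X : Set E) (hX : Convex ℝ X)
    (μ G D : ℝ) (hμ : 0 < μ) (hG : 0 < G) (hD : 0 < D)
    (hdiam : ∀ x ∈ X, ∀ y ∈ X, ‖x - y‖ ≤ D)
    (f : E → ℝ)
    (hsc : ∀ x ∈ X, ∀ y ∈ X, ∀ l : ℝ, 0 ≤ l → l ≤ 1 →
      f (l • x + (1 - l) • y) ≤
        l * f x + (1 - l) * f y - l * (1 - l) * (μ / 2) * ‖x - y‖ ^ 2)
    (hlip : ∀ x ∈ X, ∀ y ∈ X, |f x - f y| ≤ G * ‖x - y‖)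
    (T : ℕ) (hT : 1 ≤ T)
    (S : ℕ → Set E)
    (hSsub : ∀ t ∈ Finset.Icc 1 T, S t ⊆ X)
    (hSconv : ∀ t ∈ Finset.Icc 1 T, Convex ℝ (S t))
    (hnest : ∀ t, 1 ≤ t → t < T → S (t + 1) ⊆ S t)
    (xs : ℕ → E)
    (hmin : ∀ t ∈ Finset.Icc 1 T, xs t ∈ S t ∧ ∀ y ∈ S t, f (xs t) ≤ f y) :
    (∑ t ∈ Finset.Icc 1 (T - 1), ‖xs (t + 1) - xs t‖ ≤
      Real.sqrt (2 * G * D * T / μ)) ∧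
    (∀ x₀ ∈ X, ‖xs 1 - x₀‖ + ∑ t ∈ Finset.Icc 1 (T - 1), ‖xs (t + 1) - xs t‖ ≤
      Real.sqrt (2 * G * D * T / μ) + D) :=
  greedy_movement_upper_bound_strongly_convex_general X μ G D hμ hG hD hdiam f hsc hlip T hT S hSsub
    hSconv hnest xs hmin
end

section
/- Let μ, G, L, D > 0 and T ≥ 1. Let 1 ≤ t_1 < t_2 < ⋯ < t_N ≤ T be reals and δ_1, …, δ_{N−1} ∈ (0, D] be reals such that t_{k+1} ≥ t_k · (1 + μ·δ_k/(2G + L·δ_k)) for every k = 1, …, N−1. Then ∑_{k=1}^{N−1} δ_k ≤ ((2G + (L+μ)D)/μ) · log T. -/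
/-!
Taking logarithms turns the recurrence into `log (1 + r k) ≤ log t (k+1) - log t k` with
`r k = μ δ k / (2G + L δ k)`, and these increments telescope to at most `log T`. Each step pays
for its own `δ k`: from `log (1 + r) ≥ 1 - 1/(1 + r) = μ δ / (2G + (L + μ) δ)` and `δ ≤ D` we get
`δ ≤ (2G + (L + μ) D)/μ · log (1 + r)`.
-/

open Finset

theorem mul_prod_Ico_le_of_mul_le_succ {R : Type*} [CommSemiring R] [PartialOrder R]
    [IsOrderedRing R] {t c : ℕ → R} {m n : ℕ} (hmn : m ≤ n)
    (hc : ∀ k ∈ Ico m n, 0 ≤ c k) (hstep : ∀ k ∈ Ico m n, t k * c k ≤ t (k + 1)) :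
    t m * ∏ k ∈ Ico m n, c k ≤ t n := by
  induction n, hmn using Nat.le_induction with
  | base => simp
  | succ n hmn ih =>
    have hn : n ∈ Ico m (n + 1) := mem_Ico.2 ⟨hmn, n.lt_succ_self⟩
    have hsub : Ico m n ⊆ Ico m (n + 1) := Ico_subset_Ico_right n.le_succ
    calc t m * ∏ k ∈ Ico m (n + 1), c k
        = (t m * ∏ k ∈ Ico m n, c k) * c n := by rw [prod_Ico_succ_top hmn, mul_assoc]
      _ ≤ t n * c n :=
          mul_le_mul_of_nonneg_right (ih (fun k hk ↦ hc k (hsub hk))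
            (fun k hk ↦ hstep k (hsub hk))) (hc n hn)
      _ ≤ t (n + 1) := hstep n hn

theorem le_mul_log_one_add_div {μ G L D δ : ℝ} (hμ : 0 < μ) (hG : 0 < G) (hL : 0 ≤ L)
    (hδ : 0 ≤ δ) (hδD : δ ≤ D) :
    δ ≤ (2 * G + (L + μ) * D) / μ * Real.log (1 + μ * δ / (2 * G + L * δ)) := by
  have hden : 0 < 2 * G + L * δ := by positivity
  have hD : 0 ≤ D := hδ.trans hδD
  have hC : 0 < 2 * G + (L + μ) * D := by positivity
  have hinv : 1 - (1 + μ * δ / (2 * G + L * δ))⁻¹ = μ * δ / (2 * G + (L + μ) * δ) := by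
    field_simp
    ring
  have hlog : μ * δ / (2 * G + (L + μ) * D) ≤ Real.log (1 + μ * δ / (2 * G + L * δ)) :=
    calc μ * δ / (2 * G + (L + μ) * D)
        ≤ μ * δ / (2 * G + (L + μ) * δ) := by gcongr
      _ ≤ Real.log (1 + μ * δ / (2 * G + L * δ)) :=
          hinv ▸ Real.one_sub_inv_le_log_of_pos (by positivity)
  calc δ = (2 * G + (L + μ) * D) / μ * (μ * δ / (2 * G + (L + μ) * D)) := by
        field_simp
    _ ≤ (2 * G + (L + μ) * D) / μ * Real.log (1 + μ * δ / (2 * G + L * δ)) := by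
        gcongr

theorem frugal_head_distance_sum_bound_general
    (μ G L D T : ℝ) (hμ : 0 < μ) (hG : 0 < G) (hL : 0 < L) (hD : 0 < D)
    (N : ℕ) (hN : 1 ≤ N) (t : ℕ → ℝ) (δ : ℕ → ℝ)
    (ht1 : 1 ≤ t 1)
    (htN : t N ≤ T)
    (hδ : ∀ k ∈ Finset.Icc 1 (N - 1), 0 < δ k ∧ δ k ≤ D)
    (hrec : ∀ k ∈ Finset.Icc 1 (N - 1),
      t k * (1 + μ * δ k / (2 * G + L * δ k)) ≤ t (k + 1)) :
    ∑ k ∈ Finset.Icc 1 (N - 1), δ k ≤ ((2 * G + (L + μ) * D) / μ) * Real.log T := by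
  obtain ⟨n, rfl⟩ := Nat.exists_eq_add_of_le' hN
  rw [Nat.add_sub_cancel, ← Ico_add_one_right_eq_Icc] at hδ hrec ⊢
  set r : ℕ → ℝ := fun k ↦ μ * δ k / (2 * G + L * δ k)
  have hr : ∀ k ∈ Ico 1 (n + 1), 1 ≤ 1 + r k := fun k hk ↦ by
    have := (hδ k hk).1
    simp only [r, le_add_iff_nonneg_right]
    positivity
  have hgrowth : t 1 * ∏ k ∈ Ico 1 (n + 1), (1 + r k) ≤ T :=
    (mul_prod_Ico_le_of_mul_le_succ (by omega) (fun k hk ↦ by linarith [hr k hk]) hrec).trans htN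
  have hprod : 0 < ∏ k ∈ Ico 1 (n + 1), (1 + r k) :=
    prod_pos fun k hk ↦ by linarith [hr k hk]
  have hlog : ∑ k ∈ Ico 1 (n + 1), Real.log (1 + r k) ≤ Real.log T :=
    calc ∑ k ∈ Ico 1 (n + 1), Real.log (1 + r k)
        = Real.log (∏ k ∈ Ico 1 (n + 1), (1 + r k)) :=
          (Real.log_prod fun k hk ↦ by linarith [hr k hk]).symm
      _ ≤ Real.log (t 1 * ∏ k ∈ Ico 1 (n + 1), (1 + r k)) :=
          Real.log_le_log hprod (le_mul_of_one_le_left hprod.le ht1)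
      _ ≤ Real.log T := Real.log_le_log (by positivity) hgrowth
  calc ∑ k ∈ Ico 1 (n + 1), δ k
      ≤ ∑ k ∈ Ico 1 (n + 1), (2 * G + (L + μ) * D) / μ * Real.log (1 + r k) :=
        sum_le_sum fun k hk ↦
          le_mul_log_one_add_div hμ hG hL.le (hδ k hk).1.le (hδ k hk).2
    _ = (2 * G + (L + μ) * D) / μ * ∑ k ∈ Ico 1 (n + 1), Real.log (1 + r k) := by
        rw [mul_sum]
    _ ≤ (2 * G + (L + μ) * D) / μ * Real.log T := by gcongr

/-- Counting step for the O(log T) movement bound of Frugal with strongly convex and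
smooth losses: if the jump times `t 1 < ⋯ < t N` (reals in `[1, T]`) satisfy the
geometric recurrence `t (k+1) ≥ t k · (1 + μ·δ k / (2G + L·δ k))` with head distances
`δ k ∈ (0, D]`, then `∑ δ k ≤ ((2G + (L+μ)D)/μ) · log T`. -/
theorem frugal_head_distance_sum_bound
    (μ G L D T : ℝ) (hμ : 0 < μ) (hG : 0 < G) (hL : 0 < L) (hD : 0 < D)
    (hT : 1 ≤ T)
    (N : ℕ) (hN : 1 ≤ N) (t : ℕ → ℝ) (δ : ℕ → ℝ)
    (ht1 : 1 ≤ t 1)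
    (hmono : ∀ k ∈ Finset.Icc 1 (N - 1), t k < t (k + 1))
    (htN : t N ≤ T)
    (hδ : ∀ k ∈ Finset.Icc 1 (N - 1), 0 < δ k ∧ δ k ≤ D)
    (hrec : ∀ k ∈ Finset.Icc 1 (N - 1),
      t k * (1 + μ * δ k / (2 * G + L * δ k)) ≤ t (k + 1)) :
    ∑ k ∈ Finset.Icc 1 (N - 1), δ k ≤ ((2 * G + (L + μ) * D) / μ) * Real.log T :=
  frugal_head_distance_sum_bound_general μ G L D T hμ hG hL hD N hN t δ ht1 htN hδ hrec
end

section
/- Let E be a real inner product space, let K_1 ⊇ K_2 ⊇ ⋯ ⊇ K_m be nested nonempty convex subsets of E, and let p ∈ K_m (so p lies in every K_τ). Let y_0 ∈ E, and for τ = 1, …, m let y_τ ∈ K_τ be a nearest point of K_τ to y_{τ−1}, i.e. ‖y_{τ−1} − y_τ‖ ≤ ‖y_{τ−1} − z‖ for all z ∈ K_τ. Then ‖y_τ − p‖ ≤ ‖y_0 − p‖ for every τ = 0, …, m. Consequently, if ‖y_0 − p‖ ≤ δ then every iterate satisfies ‖y_τ − y_0‖ ≤ 2δ. -/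
/-!
The nearest point `v` of a convex set `S` to `u` satisfies the variational inequality
`⟪u - v, q - v⟫ ≤ 0` for every `q ∈ S`, so `‖u - q‖² = ‖u - v‖² - 2⟪u - v, q - v⟫ + ‖q - v‖²`
is at least `‖v - q‖²`: projecting onto `S` does not move a point away from any point of `S`.
By nestedness `p` lies in every `K τ`, so the distances `‖y τ - p‖` decrease along the iteration,
and the bound `2δ` follows from the triangle inequality through `p`.
-/

open scoped InnerProductSpace

theorem Convex.norm_sub_le_of_forall_norm_sub_le {E : Type*} [NormedAddCommGroup E]
    [InnerProductSpace ℝ E] {S : Set E} (hS : Convex ℝ S) {u v q : E} (hv : v ∈ S) (hq : q ∈ S)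
    (hnearest : ∀ z ∈ S, ‖u - v‖ ≤ ‖u - z‖) : ‖v - q‖ ≤ ‖u - q‖ := by
  have : Nonempty S := ⟨⟨v, hv⟩⟩
  have hinf : ‖u - v‖ = ⨅ w : S, ‖u - w‖ :=
    le_antisymm (le_ciInf fun w => hnearest w w.2)
      (ciInf_le ⟨0, by rintro _ ⟨w, rfl⟩; exact norm_nonneg _⟩ (⟨v, hv⟩ : S))
  have hvar : ⟪u - v, q - v⟫_ℝ ≤ 0 := (norm_eq_iInf_iff_real_inner_le_zero hS hv).mp hinf q hq
  have hexpand : ‖u - q‖ ^ 2 = ‖u - v‖ ^ 2 - 2 * ⟪u - v, q - v⟫_ℝ + ‖q - v‖ ^ 2 := by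
    rw [← norm_sub_sq_real, sub_sub_sub_cancel_right]
  rw [norm_sub_rev v q]
  refine le_of_sq_le_sq ?_ (norm_nonneg _)
  nlinarith [sq_nonneg ‖u - v‖]

theorem frugal_phase_confinement_general
    {E : Type*} [NormedAddCommGroup E] [InnerProductSpace ℝ E]
    (m : ℕ) (K : ℕ → Set E)
    (hconv : ∀ τ ∈ Finset.Icc 1 m, Convex ℝ (K τ))
    (hnest : ∀ τ, 1 ≤ τ → τ < m → K (τ + 1) ⊆ K τ)
    (p : E) (hp : p ∈ K m)
    (y : ℕ → E)
    (hy : ∀ τ ∈ Finset.Icc 1 m, y τ ∈ K τ ∧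
      ∀ z ∈ K τ, ‖y (τ - 1) - y τ‖ ≤ ‖y (τ - 1) - z‖)
    (δ : ℝ) :
    (∀ τ ≤ m, ‖y τ - p‖ ≤ ‖y 0 - p‖) ∧
    (‖y 0 - p‖ ≤ δ → ∀ τ ≤ m, ‖y τ - y 0‖ ≤ 2 * δ) := by
  have hK : AntitoneOn K (Set.Icc 1 m) :=
    antitoneOn_of_add_one_le Set.ordConnected_Icc fun τ _ hτ hτ' => hnest τ hτ.1 hτ'.2
  have hpK : ∀ τ ∈ Finset.Icc 1 m, p ∈ K τ := fun τ hτ => by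
    rw [Finset.mem_Icc] at hτ
    exact hK ⟨hτ.1, hτ.2⟩ ⟨hτ.1.trans hτ.2, le_rfl⟩ hτ.2 hp
  have hdist : AntitoneOn (fun τ => ‖y τ - p‖) (Set.Iic m) := by
    refine antitoneOn_of_add_one_le Set.ordConnected_Iic fun τ _ _ hτ => ?_
    have hτ' : τ + 1 ∈ Finset.Icc 1 m := Finset.mem_Icc.mpr ⟨le_add_self, hτ⟩
    obtain ⟨hmem, hnearest⟩ := hy (τ + 1) hτ'
    exact (hconv _ hτ').norm_sub_le_of_forall_norm_sub_le hmem (hpK _ hτ') hnearest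
  have hdecr : ∀ τ ≤ m, ‖y τ - p‖ ≤ ‖y 0 - p‖ := fun τ hτ =>
    hdist (Set.mem_Iic.mpr (Nat.zero_le m)) hτ (Nat.zero_le τ)
  refine ⟨hdecr, fun hδ τ hτ => ?_⟩
  calc ‖y τ - y 0‖ ≤ ‖y τ - p‖ + ‖y 0 - p‖ := by
        simpa only [dist_eq_norm] using dist_triangle_right (y τ) (y 0) p
    _ ≤ 2 * δ := by linarith [hdecr τ hτ]

/-- Phase confinement for Frugal: if `K 1 ⊇ ⋯ ⊇ K m` are nested nonempty convex sets,
`p ∈ K m` (hence `p` is in every `K τ`), and `y τ` is a nearest point of `K τ` to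
`y (τ-1)` for `τ = 1, …, m`, then `‖y τ - p‖ ≤ ‖y 0 - p‖` for all `τ ≤ m`; consequently
if `‖y 0 - p‖ ≤ δ` then every iterate satisfies `‖y τ - y 0‖ ≤ 2δ`. -/
theorem frugal_phase_confinement
    {E : Type*} [NormedAddCommGroup E] [InnerProductSpace ℝ E]
    (m : ℕ) (hm : 1 ≤ m) (K : ℕ → Set E)
    (hconv : ∀ τ ∈ Finset.Icc 1 m, Convex ℝ (K τ))
    (hnest : ∀ τ, 1 ≤ τ → τ < m → K (τ + 1) ⊆ K τ)
    (p : E) (hp : p ∈ K m)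
    (y : ℕ → E)
    (hy : ∀ τ ∈ Finset.Icc 1 m, y τ ∈ K τ ∧
      ∀ z ∈ K τ, ‖y (τ - 1) - y τ‖ ≤ ‖y (τ - 1) - z‖)
    (δ : ℝ) :
    (∀ τ ≤ m, ‖y τ - p‖ ≤ ‖y 0 - p‖) ∧
    (‖y 0 - p‖ ≤ δ → ∀ τ ≤ m, ‖y τ - y 0‖ ≤ 2 * δ) :=
  frugal_phase_confinement_general m K hconv hnest p hp y hy δ
end

section
/- Let E be a real inner product space, ε > 0, R > 0, and let p, x ∈ E satisfy ⟨p, x − p⟩ ≥ 0, ‖p‖ ≤ R, and ‖x − p‖ > ε. Then ‖x‖ − ‖p‖ ≥ ε²/(2R + ε). Consequently, for any c > 0, c‖x‖ − c‖p‖ ≥ c·ε²/(2R + ε). -/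
open scoped RealInnerProductSpace

/-- Per-step instantaneous regret lower bound for the α-sharp loss `f x = c‖x‖`:
if `⟪p, x - p⟫ ≥ 0`, `‖p‖ ≤ R`, and `‖x - p‖ > ε` with `ε, R > 0`, then
`‖x‖ - ‖p‖ ≥ ε²/(2R + ε)`; consequently `c‖x‖ - c‖p‖ ≥ c·ε²/(2R + ε)` for any `c > 0`. -/
theorem instantaneous_regret_lower_bound_sharp
    {E : Type*} [NormedAddCommGroup E] [InnerProductSpace ℝ E]
    (ε R : ℝ) (hε : 0 < ε) (hR : 0 < R) (p x : E)
    (hhalf : 0 ≤ ⟪p, x - p⟫) (hpR : ‖p‖ ≤ R) (hfar : ε < ‖x - p‖) :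
    ‖x‖ - ‖p‖ ≥ ε ^ 2 / (2 * R + ε) ∧
    ∀ c : ℝ, 0 < c → c * ‖x‖ - c * ‖p‖ ≥ c * ε ^ 2 / (2 * R + ε) := by
  have hxsq : ‖x‖ ^ 2 = ‖p‖ ^ 2 + 2 * ⟪p, x - p⟫ + ‖x - p‖ ^ 2 := by
    have := norm_add_sq_real p (x - p)
    simpa [add_sub_cancel] using this
  have h1 : ‖p‖ ^ 2 + ε ^ 2 ≤ ‖x‖ ^ 2 := by nlinarith [hfar, hε.le, hhalf]
  have hden : 0 < 2 * R + ε := by linarith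
  have hp0 : (0:ℝ) ≤ ‖p‖ := norm_nonneg p
  have hx0 : (0:ℝ) ≤ ‖x‖ := norm_nonneg x
  have key : ‖x‖ - ‖p‖ ≥ ε ^ 2 / (2 * R + ε) := by
    rw [ge_iff_le, div_le_iff₀ hden]
    have hxp : ‖p‖ ≤ ‖x‖ := by nlinarith
    by_cases h : ‖x‖ + ‖p‖ ≤ 2 * R + ε
    · nlinarith [mul_le_mul_of_nonneg_left h (sub_nonneg.mpr hxp)]
    · have hxb : ε ≤ ‖x‖ - ‖p‖ := by linarith
      nlinarith
  refine ⟨key, fun c hc => ?_⟩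
  rw [ge_iff_le, div_le_iff₀ hden] at key ⊢
  nlinarith [key, hc.le]
end

section
/- Let a, B, δ > 0 be reals and for each integer k ≥ 0 define the point x_k = ((−1)^k · B/(2√2), −(a + kδ)) in the Euclidean plane ℝ². Let R > 0 satisfy ‖x_k‖ ≤ R and ‖x_{k−1}‖ ≤ R for a given integer k ≥ 1. Then ‖x_k‖ − ‖x_{k−1}‖ ≥ a·δ/R. -/
lemma eucl2_norm_sq (y : EuclideanSpace ℝ (Fin 2)) :
    ‖y‖ ^ 2 = (y 0) ^ 2 + (y 1) ^ 2 := by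
  rw [EuclideanSpace.norm_eq, Real.sq_sqrt (by positivity)]
  simp [Fin.sum_univ_two, Real.norm_eq_abs, sq_abs]

/-- Optimal-value increase per period in the adversarial construction for the
α-sharp loss `f x = c‖x‖`: with period minimizers
`x k = ((-1)^k · B/(2√2), -(a + kδ))` in ℝ², and `R` bounding the norms of `x k` and
`x (k-1)`, the norm increases by at least `a·δ/R` per period. -/
theorem period_minimizer_norm_increase
    (a B δ R : ℝ) (ha : 0 < a) (hB : 0 < B) (hδ : 0 < δ) (hR : 0 < R)
    (x : ℕ → EuclideanSpace ℝ (Fin 2))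
    (hx : ∀ j : ℕ, x j 0 = (-1 : ℝ) ^ j * B / (2 * Real.sqrt 2) ∧
      x j 1 = -(a + (j : ℝ) * δ))
    (k : ℕ) (hk : 1 ≤ k)
    (hxk : ‖x k‖ ≤ R) (hxk1 : ‖x (k - 1)‖ ≤ R) :
    ‖x k‖ - ‖x (k - 1)‖ ≥ a * δ / R := by
  obtain ⟨h0, h1⟩ := hx k
  obtain ⟨h0', h1'⟩ := hx (k - 1)
  have hcast : ((k - 1 : ℕ) : ℝ) = (k : ℝ) - 1 := by
    have := Nat.cast_sub hk (R := ℝ); simpa using this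
  have hsq : ((-1 : ℝ) ^ k) ^ 2 = 1 := by
    rcases Nat.even_or_odd k with h | h
    · rw [h.neg_one_pow]; norm_num
    · rw [h.neg_one_pow]; norm_num
  have hsq' : ((-1 : ℝ) ^ (k - 1)) ^ 2 = 1 := by
    rcases Nat.even_or_odd (k - 1) with h | h
    · rw [h.neg_one_pow]; norm_num
    · rw [h.neg_one_pow]; norm_num
  have hk1 : (1 : ℝ) ≤ (k : ℝ) := by exact_mod_cast hk
  have hdiff : ‖x k‖ ^ 2 - ‖x (k - 1)‖ ^ 2 ≥ 2 * a * δ := by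
    rw [eucl2_norm_sq, eucl2_norm_sq, h0, h1, h0', h1', hcast]
    have heq : ((-1 : ℝ) ^ k * B / (2 * Real.sqrt 2)) ^ 2
        = ((-1 : ℝ) ^ (k - 1) * B / (2 * Real.sqrt 2)) ^ 2 := by
      rw [div_pow, div_pow, mul_pow ((-1:ℝ)^k) B, mul_pow ((-1:ℝ)^(k-1)) B, hsq, hsq']
    rw [heq]
    have key : (-(a + (k:ℝ) * δ)) ^ 2 - (-(a + ((k:ℝ) - 1) * δ)) ^ 2 ≥ 2 * a * δ := by
      nlinarith [sq_nonneg δ, mul_pos hδ hδ]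
    linarith
  have hN1 : 0 < ‖x k‖ := by
    have h1pos : (0:ℝ) < a + (k : ℝ) * δ := by positivity
    have h2 : ‖x k‖ ^ 2 > 0 := by
      rw [eucl2_norm_sq, h1]; nlinarith [sq_nonneg (x k 0)]
    nlinarith [norm_nonneg (x k)]
  have hN0 : 0 ≤ ‖x (k - 1)‖ := norm_nonneg _
  rw [ge_iff_le, div_le_iff₀ hR]
  nlinarith [hdiff, hxk, hxk1, hN1, hN0, mul_pos ha hδ]
end

section
/- Let E be a real normed vector space, α > 0, and let x_prev, m, y ∈ E and g ∈ ℝ satisfy g ≥ α·‖y − m‖. Then ‖m − x_prev‖ + 2·(‖m − y‖ − ‖x_prev − y‖) ≤ (12/α)·g. -/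
/-- Per-step potential inequality for the greedy algorithm with α-sharp losses:
if `g ≥ α·‖y - m‖`, then the greedy surrogate cost `‖m - x_prev‖` plus twice the
change in potential `‖m - y‖ - ‖x_prev - y‖` is at most `(12/α)·g`. -/
theorem greedy_per_step_potential_inequality
    {E : Type*} [NormedAddCommGroup E] [NormedSpace ℝ E]
    (α : ℝ) (hα : 0 < α) (xprev m y : E) (g : ℝ)
    (hg : α * ‖y - m‖ ≤ g) :
    ‖m - xprev‖ + 2 * (‖m - y‖ - ‖xprev - y‖) ≤ (12 / α) * g := by
  have h1 : ‖m - xprev‖ ≤ ‖m - y‖ + ‖y - xprev‖ := norm_sub_le_norm_sub_add_norm_sub m y xprev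
  have h2 : ‖y - xprev‖ = ‖xprev - y‖ := norm_sub_rev _ _
  have h3 : ‖m - y‖ = ‖y - m‖ := norm_sub_rev _ _
  have hg0 : 0 ≤ g := le_trans (by positivity) hg
  have key : ‖m - xprev‖ + 2 * (‖m - y‖ - ‖xprev - y‖) ≤ 3 * ‖y - m‖ := by
    nlinarith [norm_nonneg (xprev - y)]
  have h4 : 3 * ‖y - m‖ ≤ (12 / α) * g := by
    rw [div_mul_eq_mul_div, le_div_iff₀ hα]
    nlinarith [norm_nonneg (y - m)]
  linarith
end

section
/- Let E be a real normed vector space, α > 0, and T ≥ 1. For t = 1, …, T let S_t ⊆ E be a set, f_t : E → ℝ a function with a unique minimizer x_t^⋆ ∈ S_t over S_t that is α-sharp over S_t, i.e. f_t(y) − f_t(x_t^⋆) ≥ α·‖y − x_t^⋆‖ for all y ∈ S_t. Let the greedy algorithm play x_t = x_t^⋆ for all t starting from x_0, and let (y_t) be any comparator sequence with y_t ∈ S_t for all t and y_0 = x_0. Then ∑_{t=1}^T ‖x_t − x_{t−1}‖ ≤ (12/α)·∑_{t=1}^T (f_t(y_t) − f_t(x_t^⋆)) + 2·∑_{t=1}^T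 ‖y_t − y_{t−1}‖. -/
/-- Surrogate-cost bound behind the 12/α competitive ratio of greedy for α-sharp
losses: if at each round `t = 1, …, T` the loss `f t` has a unique minimizer
`xstar t ∈ S t` over `S t` that is α-sharp (`f t y - f t (xstar t) ≥ α‖y - xstar t‖`
for `y ∈ S t`), greedy plays `xs t = xstar t` starting from `xs 0`, and `y` is any
comparator with `y t ∈ S t` and `y 0 = xs 0`, then the greedy movement cost is at most
`(12/α)·∑ (f t (y t) - f t (xstar t)) + 2·∑ ‖y t - y (t-1)‖`. -/
theorem greedy_competitive_alpha_sharp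
    {E : Type*} [NormedAddCommGroup E] [NormedSpace ℝ E]
    (α : ℝ) (hα : 0 < α) (T : ℕ) (hT : 1 ≤ T)
    (S : ℕ → Set E) (f : ℕ → E → ℝ) (xstar : ℕ → E)
    (hsharp : ∀ t ∈ Finset.Icc 1 T, xstar t ∈ S t ∧
      ∀ z ∈ S t, f t z - f t (xstar t) ≥ α * ‖z - xstar t‖)
    (xs : ℕ → E)
    (hgreedy : ∀ t ∈ Finset.Icc 1 T, xs t = xstar t)
    (y : ℕ → E)
    (hy : ∀ t ∈ Finset.Icc 1 T, y t ∈ S t)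
    (hy0 : y 0 = xs 0) :
    ∑ t ∈ Finset.Icc 1 T, ‖xs t - xs (t - 1)‖ ≤
      (12 / α) * ∑ t ∈ Finset.Icc 1 T, (f t (y t) - f t (xstar t)) +
        2 * ∑ t ∈ Finset.Icc 1 T, ‖y t - y (t - 1)‖ := by
  classical
  set g : ℕ → ℝ := fun t => ‖y t - xs t‖ with hg
  set D : ℕ → ℝ := fun t => f t (y t) - f t (xstar t) with hD
  set m : ℕ → ℝ := fun t => ‖y t - y (t - 1)‖ with hm
  have hg0 : g 0 = 0 := by simp [hg, hy0]
  have hgD : ∀ t ∈ Finset.Icc 1 T, α * g t ≤ D t := by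
    intro t ht
    have h := (hsharp t ht).2 (y t) (hy t ht)
    simpa [hg, hD, hgreedy t ht] using h
  have hgnn : ∀ t, 0 ≤ g t := fun t => norm_nonneg _
  have hDnn : ∀ t ∈ Finset.Icc 1 T, 0 ≤ D t := by
    intro t ht
    have := hgD t ht
    nlinarith [hgnn t]
  -- pointwise triangle inequality
  have htri : ∀ t, ‖xs t - xs (t - 1)‖ ≤ g t + m t + g (t - 1) := by
    intro t
    have : xs t - xs (t - 1) =
        -(y t - xs t) + (y t - y (t - 1)) + (y (t - 1) - xs (t - 1)) := by abel
    calc ‖xs t - xs (t - 1)‖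
        = ‖-(y t - xs t) + (y t - y (t - 1)) + (y (t - 1) - xs (t - 1))‖ := by rw [this]
      _ ≤ ‖-(y t - xs t) + (y t - y (t - 1))‖ + ‖y (t - 1) - xs (t - 1)‖ :=
          norm_add_le _ _
      _ ≤ ‖-(y t - xs t)‖ + ‖y t - y (t - 1)‖ + ‖y (t - 1) - xs (t - 1)‖ := by
          gcongr; exact norm_add_le _ _
      _ = g t + m t + g (t - 1) := by simp [hg, hm, norm_sub_rev]
  -- shifted sum bound
  have hshift : ∑ t ∈ Finset.Icc 1 T, g (t - 1) ≤ ∑ t ∈ Finset.Icc 1 T, g t := by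
    have h1 : ∑ t ∈ Finset.Icc 1 T, g (t - 1) = ∑ t ∈ Finset.Icc 0 (T - 1), g t := by
      refine Finset.sum_nbij' (fun t => t - 1) (fun t => t + 1) ?_ ?_ ?_ ?_ ?_
      · intro a ha
        simp only [Finset.mem_Icc] at ha ⊢
        omega
      · intro a ha
        simp only [Finset.mem_Icc] at ha ⊢
        omega
      · intro a ha
        simp only [Finset.mem_Icc] at ha
        show a - 1 + 1 = a
        omega
      · intro a ha
        simp only [Finset.mem_Icc] at ha
        show a + 1 - 1 = a
        omega
      · intro a _; rfl
    rw [h1]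
    have h2 : Finset.Icc 0 (T - 1) = insert 0 (Finset.Icc 1 (T - 1)) := by
      ext a
      simp only [Finset.mem_insert, Finset.mem_Icc]
      omega
    rw [h2, Finset.sum_insert (by simp), hg0]
    have h3 : Finset.Icc 1 (T - 1) ⊆ Finset.Icc 1 T := by
      apply Finset.Icc_subset_Icc_right; omega
    have := Finset.sum_le_sum_of_subset_of_nonneg h3 (fun t _ _ => hgnn t)
    linarith
  have hsum : ∑ t ∈ Finset.Icc 1 T, ‖xs t - xs (t - 1)‖ ≤
      2 * ∑ t ∈ Finset.Icc 1 T, g t + ∑ t ∈ Finset.Icc 1 T, m t := by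
    calc ∑ t ∈ Finset.Icc 1 T, ‖xs t - xs (t - 1)‖
        ≤ ∑ t ∈ Finset.Icc 1 T, (g t + m t + g (t - 1)) :=
          Finset.sum_le_sum (fun t _ => htri t)
      _ = ∑ t ∈ Finset.Icc 1 T, g t + ∑ t ∈ Finset.Icc 1 T, m t
            + ∑ t ∈ Finset.Icc 1 T, g (t - 1) := by
          rw [Finset.sum_add_distrib, Finset.sum_add_distrib]
      _ ≤ 2 * ∑ t ∈ Finset.Icc 1 T, g t + ∑ t ∈ Finset.Icc 1 T, m t := by linarith
  have hgsum : α * ∑ t ∈ Finset.Icc 1 T, g t ≤ ∑ t ∈ Finset.Icc 1 T, D t := by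
    rw [Finset.mul_sum]
    exact Finset.sum_le_sum hgD
  have hDsum : 0 ≤ ∑ t ∈ Finset.Icc 1 T, D t := Finset.sum_nonneg hDnn
  have hmsum : 0 ≤ ∑ t ∈ Finset.Icc 1 T, m t :=
    Finset.sum_nonneg (fun t _ => norm_nonneg _)
  have hgsum' : ∑ t ∈ Finset.Icc 1 T, g t ≤ (1 / α) * ∑ t ∈ Finset.Icc 1 T, D t := by
    rw [div_mul_eq_mul_div, le_div_iff₀ hα]
    nlinarith
  calc ∑ t ∈ Finset.Icc 1 T, ‖xs t - xs (t - 1)‖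
      ≤ 2 * ∑ t ∈ Finset.Icc 1 T, g t + ∑ t ∈ Finset.Icc 1 T, m t := hsum
    _ ≤ 2 * ((1 / α) * ∑ t ∈ Finset.Icc 1 T, D t) + ∑ t ∈ Finset.Icc 1 T, m t := by
        linarith
    _ ≤ (12 / α) * ∑ t ∈ Finset.Icc 1 T, D t + 2 * ∑ t ∈ Finset.Icc 1 T, m t := by
        have hα' : 0 ≤ (1 : ℝ) / α := by positivity
        have : 2 * ((1 / α) * ∑ t ∈ Finset.Icc 1 T, D t)
            ≤ (12 / α) * ∑ t ∈ Finset.Icc 1 T, D t := by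
          rw [div_eq_mul_inv, div_eq_mul_inv]
          nlinarith [inv_nonneg.mpr hα.le]
        linarith
end

section
/- For every real D > 0 and every integer T ≥ 2 there exist nested compact convex sets S_1 ⊇ S_2 ⊇ ⋯ ⊇ S_T in the Euclidean plane ℝ², all contained in a square of side length D/√2 (hence of diameter D), such that the convex function f(p, q) = max(|p|, |q|) has a unique minimizer x_t^⋆ over each S_t and the total movement of the greedy algorithm satisfies ∑_{t=2}^T ‖x_t^⋆ − x_{t−1}^⋆‖ ≥ (T − 1)·D/√2. -/
noncomputable def sgR (u : ℕ) : ℝ := if Even u then 1 else -1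

lemma sgR_sq (u : ℕ) : sgR u * sgR u = 1 := by
  unfold sgR; split <;> norm_num

lemma sgR_abs (u : ℕ) : |sgR u| = 1 := by
  unfold sgR; split <;> norm_num

noncomputable def Xc (s ε : ℝ) (t : ℕ) : ℝ := s / 2 + t * ε

noncomputable def Yc (s : ℝ) (t : ℕ) : ℝ := sgR t * (s / 2)

noncomputable def ptE (s ε : ℝ) (t : ℕ) : EuclideanSpace ℝ (Fin 2) :=
  (WithLp.equiv 2 (Fin 2 → ℝ)).symm ![Xc s ε t, Yc s t]

lemma ptE_apply0 (s ε : ℝ) (t : ℕ) : ptE s ε t 0 = Xc s ε t := by simp [ptE]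
lemma ptE_apply1 (s ε : ℝ) (t : ℕ) : ptE s ε t 1 = Yc s t := by simp [ptE]

def greedySet (s ε : ℝ) (t : ℕ) : Set (EuclideanSpace ℝ (Fin 2)) :=
  {p | s/2 ≤ p 0 ∧ p 0 ≤ 3*s/2 ∧ |p 1| ≤ s/2 ∧
    ∀ u, 1 ≤ u → u ≤ t → Xc s ε u + ε/2 ≤ p 0 + ε * sgR u / s * p 1}

section Main
variable {s ε : ℝ} (hs : 0 < s) (hε : 0 < ε)

lemma greedySet_convex (t : ℕ) : Convex ℝ (greedySet s ε t) := by
  intro p hp q hq a b ha hb hab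
  obtain ⟨hp1, hp2, hp3, hp4⟩ := hp
  obtain ⟨hq1, hq2, hq3, hq4⟩ := hq
  have e0 : (a • p + b • q) 0 = a * p 0 + b * q 0 := by
    simp [PiLp.add_apply, PiLp.smul_apply, smul_eq_mul]
  have e1 : (a • p + b • q) 1 = a * p 1 + b * q 1 := by
    simp [PiLp.add_apply, PiLp.smul_apply, smul_eq_mul]
  have hp3' := abs_le.1 hp3
  have hq3' := abs_le.1 hq3
  refine ⟨?_, ?_, ?_, ?_⟩
  · rw [e0]; nlinarith [mul_le_mul_of_nonneg_left hp1 ha, mul_le_mul_of_nonneg_left hq1 hb]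
  · rw [e0]; nlinarith [mul_le_mul_of_nonneg_left hp2 ha, mul_le_mul_of_nonneg_left hq2 hb]
  · rw [e1]; rw [abs_le]; constructor <;> nlinarith [hp3'.1, hp3'.2, hq3'.1, hq3'.2]
  · intro u hu1 hu2
    rw [e0, e1]
    have h1 := mul_le_mul_of_nonneg_left (hp4 u hu1 hu2) ha
    have h2 := mul_le_mul_of_nonneg_left (hq4 u hu1 hu2) hb
    calc Xc s ε u + ε/2 = a * (Xc s ε u + ε/2) + b * (Xc s ε u + ε/2) := by
          rw [← add_mul, hab, one_mul]
      _ ≤ a * (p 0 + ε * sgR u / s * p 1) + b * (q 0 + ε * sgR u / s * q 1) := add_le_add h1 h2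
      _ = (a * p 0 + b * q 0) + ε * sgR u / s * (a * p 1 + b * q 1) := by ring

include hs in
lemma greedySet_compact (t : ℕ) : IsCompact (greedySet s ε t) := by
  apply Metric.isCompact_of_isClosed_isBounded
  · have : greedySet s ε t =
        ({p : EuclideanSpace ℝ (Fin 2) | s/2 ≤ p 0} ∩ {p | p 0 ≤ 3*s/2} ∩ {p | |p 1| ≤ s/2}) ∩
        ⋂ u ∈ Set.Icc 1 t, {p : EuclideanSpace ℝ (Fin 2) |
          Xc s ε u + ε/2 ≤ p 0 + ε * sgR u / s * p 1} := by
      ext p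
      simp only [greedySet, Set.mem_setOf_eq, Set.mem_inter_iff, Set.mem_iInter, Set.mem_Icc]
      constructor
      · rintro ⟨h1, h2, h3, h4⟩; exact ⟨⟨⟨h1, h2⟩, h3⟩, fun u hu => h4 u hu.1 hu.2⟩
      · rintro ⟨⟨⟨h1, h2⟩, h3⟩, h4⟩; exact ⟨h1, h2, h3, fun u hu1 hu2 => h4 u ⟨hu1, hu2⟩⟩
    rw [this]
    have c0 : Continuous fun p : EuclideanSpace ℝ (Fin 2) => p 0 :=
      (EuclideanSpace.proj (0 : Fin 2)).continuous
    have c1 : Continuous fun p : EuclideanSpace ℝ (Fin 2) => p 1 :=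
      (EuclideanSpace.proj (1 : Fin 2)).continuous
    refine IsClosed.inter (IsClosed.inter (IsClosed.inter ?_ ?_) ?_) ?_
    · exact isClosed_le continuous_const c0
    · exact isClosed_le c0 continuous_const
    · exact isClosed_le (c1.abs) continuous_const
    · exact isClosed_biInter fun u hu =>
        isClosed_le continuous_const (c0.add (continuous_const.mul c1))
  · rw [isBounded_iff_forall_norm_le]
    refine ⟨2 * s, fun p hp => ?_⟩
    obtain ⟨h1, h2, h3, _⟩ := hp
    have h3' := abs_le.1 h3
    rw [EuclideanSpace.norm_eq, Fin.sum_univ_two]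
    have : ‖p 0‖^2 + ‖p 1‖^2 ≤ (2*s)^2 := by
      rw [Real.norm_eq_abs, Real.norm_eq_abs, sq_abs, sq_abs]
      nlinarith [h3'.1, h3'.2]
    calc Real.sqrt (‖p 0‖^2 + ‖p 1‖^2) ≤ Real.sqrt ((2*s)^2) := Real.sqrt_le_sqrt this
      _ = 2 * s := Real.sqrt_sq (by linarith)

lemma greedySet_nested (t : ℕ) : greedySet s ε (t + 1) ⊆ greedySet s ε t := by
  rintro p ⟨h1, h2, h3, h4⟩
  exact ⟨h1, h2, h3, fun u hu1 hu2 => h4 u hu1 (Nat.le_succ_of_le hu2)⟩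

include hs hε in
lemma ptE_mem {t T : ℕ} (ht1 : 1 ≤ t) (htT : t ≤ T) (hεT : (T : ℝ) * ε ≤ s) :
    ptE s ε t ∈ greedySet s ε t := by
  have hXt : ∀ u : ℕ, u ≤ t → Xc s ε u ≤ Xc s ε t := by
    intro u hu
    unfold Xc
    have : (u : ℝ) ≤ t := Nat.cast_le.2 hu
    nlinarith
  refine ⟨?_, ?_, ?_, ?_⟩
  · rw [ptE_apply0]; unfold Xc
    have : 0 ≤ (t : ℝ) * ε := by positivity
    linarith
  · rw [ptE_apply0]; unfold Xc
    have hc : (t : ℝ) ≤ T := Nat.cast_le.2 htT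
    have : (t : ℝ) * ε ≤ s := le_trans (by nlinarith) hεT
    linarith
  · rw [ptE_apply1]; unfold Yc
    rw [abs_mul, sgR_abs, one_mul, abs_of_nonneg (by linarith)]
  · intro u hu1 hu2
    rw [ptE_apply0, ptE_apply1]
    unfold Yc
    have key : ε * sgR u / s * (sgR t * (s / 2)) = ε / 2 * (sgR u * sgR t) := by
      field_simp
    rw [key]
    rcases eq_or_ne (sgR u * sgR t) 1 with h | h
    · rw [h, mul_one]
      have := hXt u hu2
      linarith
    · -- opposite parity: sgR u * sgR t = -1 and u < t
      have hboth : (Even u ∧ ¬ Even t) ∨ (¬ Even u ∧ Even t) := by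
        by_contra hc
        push_neg at hc
        apply h
        unfold sgR
        rcases Classical.em (Even u) with h1 | h1 <;> rcases Classical.em (Even t) with h2 | h2 <;>
          simp [h1, h2] at hc ⊢ <;> tauto
      have hne : u ≠ t := by
        rcases hboth with ⟨h1, h2⟩ | ⟨h1, h2⟩ <;> exact fun he => by rw [he] at h1; exact absurd h1 (by tauto)
      have hval : sgR u * sgR t = -1 := by
        unfold sgR
        rcases hboth with ⟨h1, h2⟩ | ⟨h1, h2⟩ <;> simp [h1, h2]
      rw [hval]
      have hut : u + 1 ≤ t := Nat.succ_le_of_lt (lt_of_le_of_ne hu2 hne)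
      have := hXt (u + 1) hut
      unfold Xc at this ⊢
      push_cast at this
      nlinarith

include hs hε in
lemma ptE_unique {t : ℕ} (ht1 : 1 ≤ t) {y : EuclideanSpace ℝ (Fin 2)}
    (hy : y ∈ greedySet s ε t) (hne : y ≠ ptE s ε t) : Xc s ε t < y 0 := by
  obtain ⟨h1, h2, h3, h4⟩ := hy
  have hc := h4 t ht1 le_rfl
  by_contra hlt
  push_neg at hlt
  have hεs : 0 < ε / s := div_pos hε hs
  have h5 : sgR t * y 1 ≤ s / 2 := by
    calc sgR t * y 1 ≤ |sgR t * y 1| := le_abs_self _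
      _ = |y 1| := by rw [abs_mul, sgR_abs, one_mul]
      _ ≤ s / 2 := h3
  have hid : ε / s * (s / 2) = ε / 2 := by field_simp
  have hCle : ε * sgR t / s * y 1 ≤ ε / 2 := by
    calc ε * sgR t / s * y 1 = ε / s * (sgR t * y 1) := by ring
      _ ≤ ε / s * (s / 2) := mul_le_mul_of_nonneg_left h5 hεs.le
      _ = ε / 2 := hid
  have hy0 : y 0 = Xc s ε t := le_antisymm hlt (by linarith)
  have hEq : sgR t * y 1 = s / 2 := by
    by_contra hne2
    have h5lt : sgR t * y 1 < s / 2 := lt_of_le_of_ne h5 hne2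
    have h6 : ε / s * (sgR t * y 1) < ε / s * (s / 2) := mul_lt_mul_of_pos_left h5lt hεs
    have h7 : ε * sgR t / s * y 1 = ε / s * (sgR t * y 1) := by ring
    rw [hy0] at hc
    rw [h7] at hc
    linarith [hid ▸ h6]
  have hy1 : y 1 = Yc s t := by
    have := congrArg (fun r => sgR t * r) hEq
    simp only at this
    calc y 1 = sgR t * sgR t * y 1 := by rw [sgR_sq, one_mul]
      _ = sgR t * (sgR t * y 1) := by ring
      _ = sgR t * (s / 2) := by rw [hEq]
      _ = Yc s t := rfl
  apply hne
  apply (WithLp.equiv 2 (Fin 2 → ℝ)).injective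
  funext i
  have e0 : y 0 = ptE s ε t 0 := by rw [ptE_apply0]; exact hy0
  have e1 : y 1 = ptE s ε t 1 := by rw [ptE_apply1]; exact hy1
  fin_cases i <;> assumption

end Main

/-- Ω(T) lower bound on the movement cost of the greedy algorithm for the merely
convex loss `f (p,q) = max |p| |q|`: for every `D > 0` and `T ≥ 2` there are nested
compact convex sets `S 1 ⊇ ⋯ ⊇ S T` in ℝ², all contained in an axis-aligned square of
side `D/√2` (hence of diameter `D`), such that `f` has a unique minimizer `xs t` over
each `S t` and the greedy movement cost is at least `(T-1)·D/√2`. -/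
theorem greedy_movement_lower_bound_convex
    (D : ℝ) (hD : 0 < D) (T : ℕ) (hT : 2 ≤ T) :
    ∃ (S : ℕ → Set (EuclideanSpace ℝ (Fin 2)))
      (xs : ℕ → EuclideanSpace ℝ (Fin 2))
      (z : EuclideanSpace ℝ (Fin 2)),
      (∀ t ∈ Finset.Icc 1 T, IsCompact (S t) ∧ Convex ℝ (S t)) ∧
      (∀ t, 1 ≤ t → t < T → S (t + 1) ⊆ S t) ∧
      (∀ t ∈ Finset.Icc 1 T,
        S t ⊆ {x | ∀ i, z i ≤ x i ∧ x i ≤ z i + D / Real.sqrt 2}) ∧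
      (∀ t ∈ Finset.Icc 1 T, xs t ∈ S t ∧
        ∀ y ∈ S t, y ≠ xs t → max |xs t 0| |xs t 1| < max |y 0| |y 1|) ∧
      ((T : ℝ) - 1) * D / Real.sqrt 2 ≤ ∑ t ∈ Finset.Icc 2 T, ‖xs t - xs (t - 1)‖ := by
  have h2pos : (0:ℝ) < Real.sqrt 2 := by positivity
  set s : ℝ := D / Real.sqrt 2 with hsdef
  have hs : 0 < s := div_pos hD h2pos
  set ε : ℝ := s / (T + 1) with hεdef
  have hε : 0 < ε := by positivity
  have hT1 : (0:ℝ) < (T:ℝ) + 1 := by positivity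
  have hεT : (T : ℝ) * ε ≤ s := by
    rw [hεdef, mul_div_assoc', div_le_iff₀ hT1]
    nlinarith
  refine ⟨greedySet s ε, ptE s ε,
    (WithLp.equiv 2 (Fin 2 → ℝ)).symm ![s/2, -(s/2)], ?_, ?_, ?_, ?_, ?_⟩
  · intro t _
    exact ⟨greedySet_compact hs t, greedySet_convex t⟩
  · intro t _ _
    exact greedySet_nested t
  · intro t _ p hp
    obtain ⟨hp1, hp2, hp3, _⟩ := hp
    have habs := abs_le.1 hp3
    intro i
    fin_cases i
    · refine ⟨hp1, ?_⟩
      show p 0 ≤ s / 2 + s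
      linarith
    · refine ⟨habs.1, ?_⟩
      show p 1 ≤ -(s / 2) + s
      linarith [habs.2]
  · intro t ht
    rw [Finset.mem_Icc] at ht
    refine ⟨ptE_mem hs hε ht.1 ht.2 hεT, ?_⟩
    intro y hy hne
    have hkey : Xc s ε t < y 0 := ptE_unique hs hε ht.1 hy hne
    have hXpos : s / 2 ≤ Xc s ε t := by
      unfold Xc
      have : 0 ≤ (t:ℝ) * ε := by positivity
      linarith
    have hmax : max |ptE s ε t 0| |ptE s ε t 1| = Xc s ε t := by
      rw [ptE_apply0, ptE_apply1]
      unfold Yc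
      rw [abs_mul, sgR_abs, one_mul, abs_of_nonneg (show (0:ℝ) ≤ s/2 by linarith),
        abs_of_nonneg (by linarith : (0:ℝ) ≤ Xc s ε t)]
      exact max_eq_left hXpos
    rw [hmax]
    calc Xc s ε t < y 0 := hkey
      _ ≤ |y 0| := le_abs_self _
      _ ≤ max |y 0| |y 1| := le_max_left _ _
  · have hcard : (Finset.Icc 2 T).card = T - 1 := by rw [Nat.card_Icc]; omega
    have hterm : ∀ t ∈ Finset.Icc 2 T, s ≤ ‖ptE s ε t - ptE s ε (t - 1)‖ := by
      intro t ht
      rw [Finset.mem_Icc] at ht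
      obtain ⟨n, rfl⟩ : ∃ n, t = n + 1 := ⟨t - 1, by omega⟩
      have hn1 : n + 1 - 1 = n := rfl
      rw [hn1]
      have hv0 : (ptE s ε (n+1) - ptE s ε n) 0 = ε := by
        rw [PiLp.sub_apply, ptE_apply0, ptE_apply0]
        unfold Xc
        push_cast
        ring
      have hv1 : ((ptE s ε (n+1) - ptE s ε n) 1)^2 = s^2 := by
        rw [PiLp.sub_apply, ptE_apply1, ptE_apply1]
        unfold Yc sgR
        rcases Nat.even_or_odd n with h | h
        · have h' : ¬ Even (n + 1) := by simp [Nat.even_add_one, h]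
          simp only [h, h', if_true, if_false]
          ring
        · have h'' : ¬ Even n := Nat.not_even_iff_odd.mpr h
          have h' : Even (n + 1) := by simp [Nat.even_add_one, h'']
          simp only [h', h'', if_true, if_false]
          ring
      have hb : s^2 ≤ ‖(ptE s ε (n+1) - ptE s ε n) 0‖^2 + ‖(ptE s ε (n+1) - ptE s ε n) 1‖^2 := by
        rw [Real.norm_eq_abs, Real.norm_eq_abs, sq_abs, sq_abs, hv0, hv1]
        nlinarith
      calc s = Real.sqrt (s^2) := (Real.sqrt_sq hs.le).symm
        _ ≤ _ := by
            rw [EuclideanSpace.norm_eq, Fin.sum_univ_two]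
            exact Real.sqrt_le_sqrt hb
    have hsum := Finset.card_nsmul_le_sum (Finset.Icc 2 T) _ s hterm
    rw [hcard, nsmul_eq_mul] at hsum
    have hc : ((T - 1 : ℕ) : ℝ) = (T : ℝ) - 1 := by
      have : 1 ≤ T := by omega
      push_cast [this]
      ring
    calc ((T:ℝ) - 1) * D / Real.sqrt 2 = ((T:ℝ) - 1) * s := by rw [hsdef]; ring
      _ ≤ _ := by rw [← hc]; exact hsum
end

section
/- Let (v_t)_{t≥1} and (C_t)_{t≥1} be nondecreasing sequences of reals with C_t ≥ 0 for all t, let (c_t)_{t≥1} be a sequence of reals, and set F_t = ∑_{τ=1}^t c_τ (with F_0 = 0). Suppose that for every t ≥ 1, either F_{t−1} + c_t ≤ t·v_t + C_t (a lazy step) or c_t = v_t (a jump). Then F_t ≤ t·v_t + C_t for all t ≥ 1. In particular, if C_t = ∑_{τ=1}^t 1/τ², then F_T − T·v_T ≤ π²/6, so the regret of the Gap-Frugal algorithm under its cumulative-regret condition is bounded by the constant ∑_{τ≥1} 1/τ². -/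
/-- Regret invariant of the Gap-Frugal algorithm: if `v` and `C` are nondecreasing,
`C t ≥ 0`, `F t = ∑_{τ=1}^t c τ`, and at every step `t ≥ 1` either the lazy condition
`F (t-1) + c t ≤ t·v t + C t` holds or a jump occurs (`c t = v t`), then
`F t ≤ t·v t + C t` for all `t ≥ 1`. In particular, if `C t = ∑_{τ=1}^t 1/τ²`, then
the regret `F T - T·v T` is at most `π²/6`. -/
theorem gap_frugal_constant_regret
    (v C c : ℕ → ℝ) (F : ℕ → ℝ)
    (hF : ∀ t, F t = ∑ τ ∈ Finset.Icc 1 t, c τ)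
    (hv : ∀ s t, 1 ≤ s → s ≤ t → v s ≤ v t)
    (hCmono : ∀ s t, 1 ≤ s → s ≤ t → C s ≤ C t)
    (hCnonneg : ∀ t, 1 ≤ t → 0 ≤ C t)
    (hstep : ∀ t, 1 ≤ t →
      (F (t - 1) + c t ≤ (t : ℝ) * v t + C t) ∨ (c t = v t)) :
    (∀ t, 1 ≤ t → F t ≤ (t : ℝ) * v t + C t) ∧
    ((∀ t, 1 ≤ t → C t = ∑ τ ∈ Finset.Icc 1 t, (1 : ℝ) / (τ : ℝ) ^ 2) →
      ∀ T, 1 ≤ T → F T - (T : ℝ) * v T ≤ Real.pi ^ 2 / 6) := by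
  have hFsucc : ∀ t, F (t + 1) = F t + c (t + 1) := by
    intro t
    rw [hF, hF, Finset.sum_Icc_succ_top (by omega : 1 ≤ t + 1)]
  have main : ∀ t, 1 ≤ t → F t ≤ (t : ℝ) * v t + C t := by
    intro t ht
    induction t with
    | zero => omega
    | succ n ih =>
      rcases Nat.eq_or_lt_of_le ht with h1 | h1
      · -- n + 1 = 1
        have hn : n = 0 := by omega
        subst hn
        rcases hstep 1 le_rfl with h | h
        · simpa [hF, hFsucc] using h
        · have : F 1 = v 1 := by simp [hF, h]
          rw [this]
          push_cast
          linarith [hCnonneg 1 le_rfl]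
      · have hn : 1 ≤ n := by omega
        have ihn := ih hn
        rcases hstep (n + 1) (by omega) with h | h
        · rw [hFsucc]
          simpa using h
        · rw [hFsucc, h]
          have hv1 : v n ≤ v (n + 1) := hv n (n + 1) hn (by omega)
          have hC1 : C n ≤ C (n + 1) := hCmono n (n + 1) hn (by omega)
          push_cast
          nlinarith
  refine ⟨main, fun hC T hT => ?_⟩
  have h1 := main T hT
  have hCT : C T ≤ Real.pi ^ 2 / 6 := by
    rw [hC T hT]
    exact sum_le_hasSum _ (fun i _ => by positivity) hasSum_zeta_two
  linarith
end
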